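/- Let (X,d) be a pseudometric space with integer-valued pseudometric and let {A₀,B₀} be a partial d-split of X. Then the set of d-splits {A,B} of X extending {A₀,B₀} (i.e. with A₀ ⊆ A and B₀ ⊆ B) is finite, and the sum of their isolation indices α^d_{{A,B}} is at most α^d_{{A₀,B₀}}. -/
import Mathlib


open Set Function

noncomputable section

variable {X : Type*}

/-- `d` is a pseudometric on `X`. -/
def IsPseudometric (d : X → X → ℝ) : Prop :=
  (∀ x, d x x = 0) ∧ (∀ x y, d x y = d y x) ∧ ∀ x y z, d x z ≤ d x y + d y z

/-- `d` is a metric on `X`. -/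
def IsMetric (d : X → X → ℝ) : Prop :=
  IsPseudometric d ∧ ∀ x y, d x y = 0 → x = y

/-- `d` is integer-valued. -/
def IsIntegerValued (d : X → X → ℝ) : Prop := ∀ x y, ∃ n : ℤ, d x y = (n : ℝ)

/-- The quantity `β^d` associated to the four points `a, a', b, b'`. -/
def betaIdx (d : X → X → ℝ) (a a' b b' : X) : ℝ :=
  (max (max (d a b + d a' b') (d a' b + d a b')) (d a a' + d b b') - d a a' - d b b') / 2

/-- The isolation index `α^d_{{A,B}}` of the pair `{A,B}`. -/
def isolIdx (d : X → X → ℝ) (A B : Set X) : ℝ :=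
  sInf {r : ℝ | ∃ a ∈ A, ∃ a' ∈ A, ∃ b ∈ B, ∃ b' ∈ B, r = betaIdx d a a' b b'}

/-- `{A, B}` is a partial split of `X`. -/
def IsPartialSplit (A B : Set X) : Prop := A.Nonempty ∧ B.Nonempty ∧ Disjoint A B

/-- `{A, B}` is a split of `X`. -/
def IsSplit (A B : Set X) : Prop := IsPartialSplit A B ∧ A ∪ B = univ

/-- `{A, B}` is a `d`-split of `X`. -/
def IsDSplit (d : X → X → ℝ) (A B : Set X) : Prop := IsSplit A B ∧ 0 < isolIdx d A B

open Classical in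
/-- The split pseudometric `δ_S` of the split `{A, Aᶜ}`. -/
def splitDist (A : Set X) (x y : X) : ℝ := if x ∈ A ↔ y ∈ A then 0 else 1

lemma beta_nonneg (d : X → X → ℝ) (a a' b b' : X) : 0 ≤ betaIdx d a a' b b' := by
  unfold betaIdx
  have := le_max_right (max (d a b + d a' b') (d a' b + d a b')) (d a a' + d b b')
  linarith

lemma isol_bdd (d : X → X → ℝ) (A B : Set X) :
    BddBelow {r : ℝ | ∃ a ∈ A, ∃ a' ∈ A, ∃ b ∈ B, ∃ b' ∈ B, r = betaIdx d a a' b b'} := by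
  refine ⟨0, ?_⟩
  rintro r ⟨a, _, a', _, b, _, b', _, rfl⟩
  exact beta_nonneg d a a' b b'

lemma isol_le (d : X → X → ℝ) {A B : Set X} {a a' b b' : X}
    (ha : a ∈ A) (ha' : a' ∈ A) (hb : b ∈ B) (hb' : b' ∈ B) :
    isolIdx d A B ≤ betaIdx d a a' b b' :=
  csInf_le (isol_bdd d A B) ⟨a, ha, a', ha', b, hb, b', hb', rfl⟩

lemma isol_nonneg (d : X → X → ℝ) (A B : Set X) : 0 ≤ isolIdx d A B := by
  apply Real.sInf_nonneg
  rintro r ⟨a, _, a', _, b, _, b', _, rfl⟩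
  exact beta_nonneg d a a' b b'

lemma splitDist_comm (A : Set X) (x y : X) : splitDist A x y = splitDist A y x := by
  by_cases hx : x ∈ A <;> by_cases hy : y ∈ A <;> simp [splitDist, hx, hy]

lemma beta_comm (d : X → X → ℝ) (hsymm : ∀ x y, d x y = d y x) (a a' b b' : X) :
    betaIdx d a a' b b' = betaIdx d b b' a a' := by
  unfold betaIdx
  rw [hsymm b a, hsymm b' a', hsymm b' a, hsymm b a',
    add_comm (d a b') (d a' b), add_comm (d b b') (d a a')]
  ring

lemma beta_lower {d : X → X → ℝ} {a a' b b' : X} {c : ℝ}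
    (h : c ≤ betaIdx d a a' b b') (hc : 0 < c) :
    d a a' + d b b' + 2 * c ≤ max (d a b + d a' b') (d a' b + d a b') := by
  unfold betaIdx at h
  rcases le_total (max (d a b + d a' b') (d a' b + d a b')) (d a a' + d b b') with h' | h'
  · rw [max_eq_right h'] at h; linarith
  · rw [max_eq_left h'] at h; linarith

lemma beta_mono (d D : X → X → ℝ) (a a' b b' : X)
    (h1 : d a b + d a' b' - d a a' - d b b' ≤ D a b + D a' b' - D a a' - D b b')
    (h2 : d a' b + d a b' - d a a' - d b b' ≤ D a' b + D a b' - D a a' - D b b') :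
    betaIdx d a a' b b' ≤ betaIdx D a a' b b' := by
  unfold betaIdx
  have a1 : D a b + D a' b' ≤ max (max (D a b + D a' b') (D a' b + D a b')) (D a a' + D b b') :=
    (le_max_left _ _).trans (le_max_left _ _)
  have a2 : D a' b + D a b' ≤ max (max (D a b + D a' b') (D a' b + D a b')) (D a a' + D b b') :=
    (le_max_right _ _).trans (le_max_left _ _)
  have a3 : D a a' + D b b' ≤ max (max (D a b + D a' b') (D a' b + D a b')) (D a a' + D b b') :=
    le_max_right _ _
  have b1 : max (max (d a b + d a' b') (d a' b + d a b')) (d a a' + d b b') ≤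
      max (max (D a b + D a' b') (D a' b + D a b')) (D a a' + D b b') - D a a' - D b b'
        + d a a' + d b b' :=
    max_le (max_le (by linarith) (by linarith)) (by linarith)
  linarith

lemma beta_shift {T1 T2 p q c : ℝ} (h : p + q + 2 * c ≤ max T1 T2) (hc : 0 ≤ c) :
    (max (max (T1 - 2 * c) (T2 - 2 * c)) (p + q) - p - q) / 2 ≤
      (max (max T1 T2) (p + q) - p - q) / 2 - c := by
  have e1 : max (T1 - 2 * c) (T2 - 2 * c) = max T1 T2 - 2 * c := by
    rcases le_total T1 T2 with h' | h'
    · rw [max_eq_right h', max_eq_right (by linarith)]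
    · rw [max_eq_left h', max_eq_left (by linarith)]
  rw [e1, max_eq_left (show p + q ≤ max T1 T2 - 2 * c by linarith),
    max_eq_left (show p + q ≤ max T1 T2 by linarith)]
  linarith

lemma beta_shift_ge {T1 T2 p q c γ : ℝ} (h : p + q + 2 * γ + 2 * c ≤ max T1 T2) :
    γ ≤ (max (max (T1 - 2 * c) (T2 - 2 * c)) (p + q) - p - q) / 2 := by
  have e1 : max (T1 - 2 * c) (T2 - 2 * c) = max T1 T2 - 2 * c := by
    rcases le_total T1 T2 with h' | h'
    · rw [max_eq_right h', max_eq_right (by linarith)]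
    · rw [max_eq_left h', max_eq_left (by linarith)]
  have e2 : max T1 T2 - 2 * c ≤ max (max (T1 - 2 * c) (T2 - 2 * c)) (p + q) := by
    rw [e1]; exact le_max_left _ _
  linarith

lemma quartet {aa' ab ab' a'b a'b' bb' ax a'x xb xb' s t M : ℝ}
    (hM1 : ab + a'b' ≤ M) (hM2 : a'b + ab' ≤ M)
    (h1 : aa' + xb + t ≤ max (ax + a'b) (a'x + ab))
    (h2 : aa' + xb' + t ≤ max (ax + a'b') (a'x + ab'))
    (h3 : ax + bb' + s ≤ max (ab + xb') (xb + ab'))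
    (h4 : a'x + bb' + s ≤ max (a'b + xb') (xb + a'b')) :
    aa' + bb' + (s + t) ≤ M := by
  rcases le_max_iff.mp h1 with h1 | h1 <;> rcases le_max_iff.mp h2 with h2 | h2 <;>
    rcases le_max_iff.mp h3 with h3 | h3 <;> rcases le_max_iff.mp h4 with h4 | h4 <;>
    linarith

lemma le_isol (d : X → X → ℝ) {A B : Set X} {c : ℝ} (hA : A.Nonempty) (hB : B.Nonempty)
    (h : ∀ a ∈ A, ∀ a' ∈ A, ∀ b ∈ B, ∀ b' ∈ B, c ≤ betaIdx d a a' b b') :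
    c ≤ isolIdx d A B := by
  obtain ⟨p, hp⟩ := hA
  obtain ⟨q, hq⟩ := hB
  unfold isolIdx
  refine le_csInf ?_ ?_
  · exact ⟨betaIdx d p p q q, p, hp, p, hp, q, hq, q, hq, rfl⟩
  rintro r ⟨a, ha, a', ha', b, hb, b', hb', rfl⟩
  exact h a ha a' ha' b hb b' hb'

lemma key1 (d : X → X → ℝ) (A A₀ B₀ : Set X) (hA₀ : A₀.Nonempty) (hB₀ : B₀.Nonempty)
    (hsA : A₀ ⊆ A) (hsB : B₀ ⊆ Aᶜ) (hα : 0 < isolIdx d A Aᶜ) :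
    isolIdx (fun x y => d x y - isolIdx d A Aᶜ * splitDist A x y) A₀ B₀ ≤
      isolIdx d A₀ B₀ - isolIdx d A Aᶜ := by
  set α := isolIdx d A Aᶜ with hαdef
  set D := fun x y => d x y - α * splitDist A x y with hD
  have key : ∀ a ∈ A₀, ∀ a' ∈ A₀, ∀ b ∈ B₀, ∀ b' ∈ B₀,
      isolIdx D A₀ B₀ + α ≤ betaIdx d a a' b b' := by
    intro a ha a' ha' b hb b' hb'
    have h1 : isolIdx D A₀ B₀ ≤ betaIdx D a a' b b' := isol_le D ha ha' hb hb'
    have h2 : α ≤ betaIdx d a a' b b' := isol_le d (hsA ha) (hsA ha') (hsB hb) (hsB hb')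
    have h3 := beta_lower h2 hα
    have haA : a ∈ A := hsA ha
    have ha'A : a' ∈ A := hsA ha'
    have hbA : b ∉ A := hsB hb
    have hb'A : b' ∉ A := hsB hb'
    have E1 : α * splitDist A a b = α := by simp [splitDist, haA, hbA]
    have E2 : α * splitDist A a' b' = α := by simp [splitDist, ha'A, hb'A]
    have E3 : α * splitDist A a' b = α := by simp [splitDist, ha'A, hbA]
    have E4 : α * splitDist A a b' = α := by simp [splitDist, haA, hb'A]
    have E5 : α * splitDist A a a' = 0 := by simp [splitDist, haA, ha'A]
    have E6 : α * splitDist A b b' = 0 := by simp [splitDist, hbA, hb'A]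
    have hDβ : betaIdx D a a' b b' ≤ betaIdx d a a' b b' - α := by
      unfold betaIdx
      simp only [hD, E1, E2, E3, E4, E5, E6, sub_zero]
      rw [show d a b - α + (d a' b' - α) = d a b + d a' b' - 2 * α by ring,
        show d a' b - α + (d a b' - α) = d a' b + d a b' - 2 * α by ring]
      exact beta_shift h3 hα.le
    linarith
  have := le_isol d hA₀ hB₀ key
  linarith

lemma key2 (d : X → X → ℝ) (hsymm : ∀ x y, d x y = d y x) (A C A₀ B₀ : Set X)
    (hAC : A ≠ C) (x₀ : X) (hx₀A : x₀ ∈ A) (hx₀C : x₀ ∈ C)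
    (hCA₀ : A₀ ⊆ C) (hCB₀ : B₀ ⊆ Cᶜ) (hA₀ : A₀.Nonempty) (hB₀ : B₀.Nonempty)
    (hα : 0 < isolIdx d A Aᶜ) (hγ : 0 < isolIdx d C Cᶜ) :
    isolIdx d C Cᶜ ≤ isolIdx (fun x y => d x y - isolIdx d A Aᶜ * splitDist A x y) C Cᶜ := by
  set α := isolIdx d A Aᶜ with hαdef
  set γ := isolIdx d C Cᶜ with hγdef
  set D := fun x y => d x y - α * splitDist A x y with hD
  have hCne : C.Nonempty := ⟨_, hCA₀ hA₀.choose_spec⟩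
  have hCcne : Cᶜ.Nonempty := ⟨_, hCB₀ hB₀.choose_spec⟩
  apply le_isol D hCne hCcne
  intro c hcC c' hc'C e heC e' he'C
  have hβ : γ ≤ betaIdx d c c' e e' := isol_le d hcC hc'C heC he'C
  by_cases hcA : c ∈ A <;> by_cases hc'A : c' ∈ A <;> by_cases heA : e ∈ A <;>
    by_cases he'A : e' ∈ A
  all_goals try {
    refine le_trans hβ (beta_mono d D c c' e e' ?_ ?_) <;>
      (simp [hD, splitDist, hcA, hc'A, heA, he'A] <;> linarith [hα.le]) }
  -- remaining: case c,c' ∈ A, e,e' ∉ A and case c,c' ∉ A, e,e' ∈ A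
  · -- c,c' ∈ A, e,e' ∉ A
    obtain ⟨x, hx⟩ : ∃ x, (x ∈ A ∧ x ∉ C) ∨ (x ∈ C ∧ x ∉ A) := by
      by_contra hcon
      push_neg at hcon
      apply hAC
      ext z
      have := hcon z
      tauto
    have E1 : α * splitDist A c e = α := by simp [splitDist, hcA, heA]
    have E2 : α * splitDist A c' e' = α := by simp [splitDist, hc'A, he'A]
    have E3 : α * splitDist A c' e = α := by simp [splitDist, hc'A, heA]
    have E4 : α * splitDist A c e' = α := by simp [splitDist, hcA, he'A]
    have E5 : α * splitDist A c c' = 0 := by simp [splitDist, hcA, hc'A]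
    have E6 : α * splitDist A e e' = 0 := by simp [splitDist, heA, he'A]
    have hfin : d c c' + d e e' + (2 * α + 2 * γ) ≤
        max (d c e + d c' e') (d c' e + d c e') := by
      rcases hx with ⟨hxA, hxC⟩ | ⟨hxC, hxA⟩
      · -- x ∈ A ∩ Cᶜ : quartet with (a,a',b,b') = (c,c',e,e')
        have Q1 := beta_lower (isol_le d hcC hc'C (show x ∈ Cᶜ from hxC) heC) hγ
        have Q2 := beta_lower (isol_le d hcC hc'C (show x ∈ Cᶜ from hxC) he'C) hγ
        have Q3 := beta_lower (isol_le d hcA hxA (show e ∈ Aᶜ from heA)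
          (show e' ∈ Aᶜ from he'A)) hα
        have Q4 := beta_lower (isol_le d hc'A hxA (show e ∈ Aᶜ from heA)
          (show e' ∈ Aᶜ from he'A)) hα
        have := quartet (M := max (d c e + d c' e') (d c' e + d c e'))
          (le_max_left _ _) (le_max_right _ _) Q1 Q2 Q3 Q4
        linarith
      · -- x ∈ C ∩ Aᶜ : quartet with (a,a',b,b') = (e,e',c,c')
        have Q1 := beta_lower (le_of_le_of_eq
          (isol_le d hxC hcC heC he'C) (beta_comm d hsymm x c e e')) hγ
        have Q2 := beta_lower (le_of_le_of_eq
          (isol_le d hxC hc'C heC he'C) (beta_comm d hsymm x c' e e')) hγ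
        have Q3 := beta_lower (le_of_le_of_eq
          (isol_le d hcA hc'A (show e ∈ Aᶜ from heA) (show x ∈ Aᶜ from hxA))
          (beta_comm d hsymm c c' e x)) hα
        have Q4 := beta_lower (le_of_le_of_eq
          (isol_le d hcA hc'A (show e' ∈ Aᶜ from he'A) (show x ∈ Aᶜ from hxA))
          (beta_comm d hsymm c c' e' x)) hα
        have Q := quartet (M := max (d c e + d c' e') (d c' e + d c e'))
          (show d e c + d e' c' ≤ _ by
            have := le_max_left (d c e + d c' e') (d c' e + d c e')
            linarith [hsymm e c, hsymm e' c'])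
          (show d e' c + d e c' ≤ _ by
            have := le_max_right (d c e + d c' e') (d c' e + d c e')
            linarith [hsymm e' c, hsymm e c'])
          Q1 Q2 Q3 Q4
        linarith
    show γ ≤ betaIdx D c c' e e'
    unfold betaIdx
    simp only [hD, E1, E2, E3, E4, E5, E6, sub_zero]
    rw [show d c e - α + (d c' e' - α) = d c e + d c' e' - 2 * α by ring,
      show d c' e - α + (d c e' - α) = d c' e + d c e' - 2 * α by ring]
    exact beta_shift_ge (by linarith)
  · -- c,c' ∉ A, e,e' ∈ A : use x₀ ∈ A ∩ C
    have E1 : α * splitDist A c e = α := by simp [splitDist, hcA, heA]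
    have E2 : α * splitDist A c' e' = α := by simp [splitDist, hc'A, he'A]
    have E3 : α * splitDist A c' e = α := by simp [splitDist, hc'A, heA]
    have E4 : α * splitDist A c e' = α := by simp [splitDist, hcA, he'A]
    have E5 : α * splitDist A c c' = 0 := by simp [splitDist, hcA, hc'A]
    have E6 : α * splitDist A e e' = 0 := by simp [splitDist, heA, he'A]
    have hfin : d c c' + d e e' + (2 * α + 2 * γ) ≤
        max (d c e + d c' e') (d c' e + d c e') := by
      have Q1 := beta_lower (le_of_le_of_eq
        (isol_le d hx₀C hcC heC he'C) (beta_comm d hsymm x₀ c e e')) hγ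
      have Q2 := beta_lower (le_of_le_of_eq
        (isol_le d hx₀C hc'C heC he'C) (beta_comm d hsymm x₀ c' e e')) hγ
      have Q3 := beta_lower (isol_le d heA hx₀A (show c ∈ Aᶜ from hcA)
        (show c' ∈ Aᶜ from hc'A)) hα
      have Q4 := beta_lower (isol_le d he'A hx₀A (show c ∈ Aᶜ from hcA)
        (show c' ∈ Aᶜ from hc'A)) hα
      have Q := quartet (M := max (d c e + d c' e') (d c' e + d c e'))
        (show d e c + d e' c' ≤ _ by
          have := le_max_left (d c e + d c' e') (d c' e + d c e')
          linarith [hsymm e c, hsymm e' c'])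
        (show d e' c + d e c' ≤ _ by
          have := le_max_right (d c e + d c' e') (d c' e + d c e')
          linarith [hsymm e' c, hsymm e c'])
        Q1 Q2 Q3 Q4
      linarith
    show γ ≤ betaIdx D c c' e e'
    unfold betaIdx
    simp only [hD, E1, E2, E3, E4, E5, E6, sub_zero]
    rw [show d c e - α + (d c' e' - α) = d c e + d c' e' - 2 * α by ring,
      show d c' e - α + (d c e' - α) = d c' e + d c e' - 2 * α by ring]
    exact beta_shift_ge (by linarith)

lemma sum_le (A₀ B₀ : Set X) (hA₀ : A₀.Nonempty) (hB₀ : B₀.Nonempty) (F : Finset (Set X)) :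
    ∀ d : X → X → ℝ, (∀ x y, d x y = d y x) →
      (∀ C ∈ F, A₀ ⊆ C ∧ B₀ ⊆ Cᶜ ∧ 0 < isolIdx d C Cᶜ) →
      ∑ C ∈ F, isolIdx d C Cᶜ ≤ isolIdx d A₀ B₀ := by
  classical
  induction F using Finset.induction_on with
  | empty =>
    intro d _ _
    simpa using isol_nonneg d A₀ B₀
  | @insert A F' hA ih =>
    intro d hsymm hF
    obtain ⟨hAA₀, hAB₀, hαpos⟩ := hF A (Finset.mem_insert_self A F')
    set D := fun x y => d x y - isolIdx d A Aᶜ * splitDist A x y with hD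
    have hDsymm : ∀ x y, D x y = D y x := by
      intro x y
      simp only [hD]
      rw [hsymm x y, splitDist_comm]
    obtain ⟨x₀, hx₀⟩ := id hA₀
    have hF' : ∀ C ∈ F', A₀ ⊆ C ∧ B₀ ⊆ Cᶜ ∧ 0 < isolIdx D C Cᶜ := by
      intro C hC
      obtain ⟨h1, h2, h3⟩ := hF C (Finset.mem_insert_of_mem hC)
      refine ⟨h1, h2, lt_of_lt_of_le h3 ?_⟩
      exact key2 d hsymm A C A₀ B₀ (by rintro rfl; exact hA hC) x₀ (hAA₀ hx₀) (h1 hx₀)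
        h1 h2 hA₀ hB₀ hαpos h3
    have hmono : ∀ C ∈ F', isolIdx d C Cᶜ ≤ isolIdx D C Cᶜ := by
      intro C hC
      obtain ⟨h1, h2, h3⟩ := hF C (Finset.mem_insert_of_mem hC)
      exact key2 d hsymm A C A₀ B₀ (by rintro rfl; exact hA hC) x₀ (hAA₀ hx₀) (h1 hx₀)
        h1 h2 hA₀ hB₀ hαpos h3
    have hIH := ih D hDsymm hF'
    have hk1 := key1 d A A₀ B₀ hA₀ hB₀ hAA₀ hAB₀ hαpos
    rw [Finset.sum_insert hA]
    have hsum' : ∑ C ∈ F', isolIdx d C Cᶜ ≤ ∑ C ∈ F', isolIdx D C Cᶜ :=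
      Finset.sum_le_sum hmono
    linarith

lemma isol_ge_half {d : X → X → ℝ} (hint : ∀ x y, ∃ n : ℤ, d x y = (n : ℝ))
    {A B : Set X} (hA : A.Nonempty) (hB : B.Nonempty) (hpos : 0 < isolIdx d A B) :
    1 / 2 ≤ isolIdx d A B := by
  apply le_isol d hA hB
  intro a ha a' ha' b hb b' hb'
  have hmem : isolIdx d A B ≤ betaIdx d a a' b b' := isol_le d ha ha' hb hb'
  obtain ⟨i1, e1⟩ := hint a b
  obtain ⟨i2, e2⟩ := hint a' b'
  obtain ⟨i3, e3⟩ := hint a' b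
  obtain ⟨i4, e4⟩ := hint a b'
  obtain ⟨i5, e5⟩ := hint a a'
  obtain ⟨i6, e6⟩ := hint b b'
  have hk : betaIdx d a a' b b' =
      ((max (max (i1 + i2) (i3 + i4)) (i5 + i6) - i5 - i6 : ℤ) : ℝ) / 2 := by
    unfold betaIdx
    rw [e1, e2, e3, e4, e5, e6]
    push_cast
    ring_nf
  set k : ℤ := max (max (i1 + i2) (i3 + i4)) (i5 + i6) - i5 - i6 with hkdef
  have hkpos : 0 < k := by
    by_contra hle
    push_neg at hle
    have : betaIdx d a a' b b' ≤ 0 := by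
      rw [hk]
      have : (k : ℝ) ≤ 0 := by exact_mod_cast hle
      linarith
    linarith
  have : (1 : ℝ) ≤ (k : ℝ) := by exact_mod_cast hkpos
  rw [hk]
  linarith

theorem statement4 (d : X → X → ℝ) (hd : IsPseudometric d)
    (hint : IsIntegerValued d)
    (A₀ B₀ : Set X) (hps : IsPartialSplit A₀ B₀) (hpos : 0 < isolIdx d A₀ B₀) :
    {A : Set X | IsDSplit d A Aᶜ ∧ A₀ ⊆ A ∧ B₀ ⊆ Aᶜ}.Finite ∧
      ∑ᶠ A ∈ {A : Set X | IsDSplit d A Aᶜ ∧ A₀ ⊆ A ∧ B₀ ⊆ Aᶜ}, isolIdx d A Aᶜ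
        ≤ isolIdx d A₀ B₀ := by
  have hA₀ : A₀.Nonempty := hps.1
  have hB₀ : B₀.Nonempty := hps.2.1
  have hsymm : ∀ x y, d x y = d y x := hd.2.1
  set S := {A : Set X | IsDSplit d A Aᶜ ∧ A₀ ⊆ A ∧ B₀ ⊆ Aᶜ} with hS
  have hhalf : ∀ A ∈ S, 1 / 2 ≤ isolIdx d A Aᶜ := by
    intro A hA
    exact isol_ge_half hint hA.1.1.1.1 hA.1.1.1.2.1 hA.1.2
  have hsum : ∀ F : Finset (Set X), ↑F ⊆ S →
      ∑ C ∈ F, isolIdx d C Cᶜ ≤ isolIdx d A₀ B₀ := by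
    intro F hFs
    exact sum_le A₀ B₀ hA₀ hB₀ F d hsymm
      (fun C hC => ⟨(hFs hC).2.1, (hFs hC).2.2, (hFs hC).1.2⟩)
  have hfin : S.Finite := by
    by_contra hinf
    have hinf' : S.Infinite := hinf
    obtain ⟨F, hFsub, hcard⟩ :=
      hinf'.exists_subset_card_eq (⌈2 * isolIdx d A₀ B₀⌉₊ + 1)
    have h1 := hsum F hFsub
    have h2 := Finset.card_nsmul_le_sum F (fun C => isolIdx d C Cᶜ) (1 / 2)
      (fun C hC => hhalf C (hFsub hC))
    rw [nsmul_eq_mul] at h2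
    have hc1 : 2 * isolIdx d A₀ B₀ ≤ (⌈2 * isolIdx d A₀ B₀⌉₊ : ℝ) := Nat.le_ceil _
    have hc2 : (F.card : ℝ) = (⌈2 * isolIdx d A₀ B₀⌉₊ : ℝ) + 1 := by
      rw [hcard]; push_cast; ring
    linarith
  refine ⟨hfin, ?_⟩
  rw [finsum_mem_eq_finite_toFinset_sum _ hfin]
  exact hsum hfin.toFinset (by simp)
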